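/- arXiv:2301.11302 — 2 statements merged into one kernel-verified Lean document; each statement's English description precedes it below -/
import Mathlib

section
/- Let $p : \mathbb{R} \to [0,\infty)$ be a bounded probability density, symmetric ($p(x) = p(-x)$) and continuous at $0$. Define $T_\varepsilon(x) = \tanh(2x/\varepsilon)$ and $T_0(x) = \mathrm{sign}(x)$. Then $\int_{\mathbb{R}} (T_\varepsilon(x) - T_0(x))^2 p(x)\,dx = \varepsilon\, p(0)(\log 4 - 1) + o(\varepsilon)$ as $\varepsilon \to 0^+$. -/
open MeasureTheory Filter Set Real

namespace TanhAux

lemma hasDerivAt_tanh (x : ℝ) :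
    HasDerivAt Real.tanh (1 - Real.tanh x ^ 2) x := by
  have hc : Real.cosh x ≠ 0 := (Real.cosh_pos x).ne'
  have h := (Real.hasDerivAt_sinh x).fun_div (Real.hasDerivAt_cosh x) hc
  have heq : (fun y => Real.sinh y / Real.cosh y) = Real.tanh := by
    funext y; rw [Real.tanh_eq_sinh_div_cosh]
  rw [heq] at h
  refine h.congr_deriv ?_
  rw [Real.tanh_eq_sinh_div_cosh]
  have h1 : Real.cosh x ^ 2 - Real.sinh x ^ 2 = 1 := Real.cosh_sq_sub_sinh_sq x
  field_simp

noncomputable def F (x : ℝ) : ℝ :=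
  2 * x - 2 * Real.log (Real.cosh x) - Real.tanh x

lemma hasDerivAt_F (x : ℝ) : HasDerivAt F ((1 - Real.tanh x) ^ 2) x := by
  have hc : Real.cosh x ≠ 0 := (Real.cosh_pos x).ne'
  have h1 : HasDerivAt (fun y : ℝ => 2 * y) 2 x := by
    simpa using (hasDerivAt_id x).const_mul 2
  have h2 : HasDerivAt (fun y => Real.log (Real.cosh y)) (Real.sinh x / Real.cosh x) x :=
    (Real.hasDerivAt_cosh x).log hc
  have h := (h1.fun_sub (h2.const_mul 2)).fun_sub (hasDerivAt_tanh x)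
  refine h.congr_deriv ?_
  rw [← Real.tanh_eq_sinh_div_cosh]
  ring

lemma tanh_formula (x : ℝ) :
    Real.tanh x = (1 - Real.exp (-(2 * x))) / (1 + Real.exp (-(2 * x))) := by
  rw [Real.tanh_eq_sinh_div_cosh, Real.sinh_eq, Real.cosh_eq]
  have h2 : Real.exp x * Real.exp (-x) = 1 := by
    rw [← Real.exp_add]; simp
  have h3 : Real.exp (-(2 * x)) = Real.exp (-x) * Real.exp (-x) := by
    rw [← Real.exp_add]; ring_nf
  have hp1 : (0:ℝ) < Real.exp x + Real.exp (-x) := by positivity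
  have hp2 : (0:ℝ) < 1 + Real.exp (-(2 * x)) := by positivity
  rw [div_eq_div_iff (by positivity) hp2.ne']
  rw [h3]
  nlinarith [h2, Real.exp_pos x, Real.exp_pos (-x)]

lemma log_cosh (x : ℝ) :
    Real.log (Real.cosh x) = x + Real.log (1 + Real.exp (-(2 * x))) - Real.log 2 := by
  have h : Real.cosh x = Real.exp x * (1 + Real.exp (-(2 * x))) / 2 := by
    rw [Real.cosh_eq]
    rw [show Real.exp (-(2 * x)) = Real.exp (-x) * Real.exp (-x) by rw [← Real.exp_add]; ring_nf]
    rw [show Real.exp x * (1 + Real.exp (-x) * Real.exp (-x)) =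
      Real.exp x + (Real.exp x * Real.exp (-x)) * Real.exp (-x) by ring]
    rw [show Real.exp x * Real.exp (-x) = 1 by rw [← Real.exp_add]; simp]
    ring
  rw [h, Real.log_div (by positivity) two_ne_zero,
    Real.log_mul (Real.exp_pos x).ne' (by positivity), Real.log_exp]

lemma exp_tendsto : Tendsto (fun x : ℝ => Real.exp (-(2 * x))) atTop (nhds 0) := by
  apply Real.tendsto_exp_atBot.comp
  apply tendsto_neg_atTop_atBot.comp
  exact tendsto_id.const_mul_atTop two_pos

lemma tanh_tendsto : Tendsto Real.tanh atTop (nhds 1) := by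
  have h : Tendsto (fun x : ℝ => (1 - Real.exp (-(2 * x))) / (1 + Real.exp (-(2 * x))))
      atTop (nhds 1) := by
    have h1 : Tendsto (fun x : ℝ => 1 - Real.exp (-(2 * x))) atTop (nhds (1 - 0)) :=
      tendsto_const_nhds.sub exp_tendsto
    have h2 : Tendsto (fun x : ℝ => 1 + Real.exp (-(2 * x))) atTop (nhds (1 + 0)) :=
      tendsto_const_nhds.add exp_tendsto
    have := h1.div h2 (by norm_num)
    simpa [Pi.div_def] using this
  exact h.congr fun x => (tanh_formula x).symm

lemma F_tendsto : Tendsto F atTop (nhds (Real.log 4 - 1)) := by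
  have hlog4 : Real.log 4 = 2 * Real.log 2 := by
    rw [show (4:ℝ) = 2 ^ 2 by norm_num, Real.log_pow]; push_cast; ring
  have hF : F = fun x => 2 * Real.log 2 - 2 * Real.log (1 + Real.exp (-(2 * x))) -
      Real.tanh x := by
    funext x; rw [F, log_cosh]; ring
  rw [hF, hlog4]
  have hl : Tendsto (fun x : ℝ => Real.log (1 + Real.exp (-(2 * x)))) atTop (nhds 0) := by
    have hc : ContinuousAt Real.log (1 + 0) := Real.continuousAt_log (by norm_num)
    have := hc.tendsto.comp (tendsto_const_nhds.add exp_tendsto)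
    simpa [Function.comp_def] using this
  have h1 : Tendsto (fun x : ℝ => 2 * Real.log 2 - 2 * Real.log (1 + Real.exp (-(2 * x))))
      atTop (nhds (2 * Real.log 2 - 2 * 0)) := tendsto_const_nhds.sub (hl.const_mul 2)
  have := h1.sub tanh_tendsto
  simpa using this

lemma integrableOn_Ioi : IntegrableOn (fun x => (1 - Real.tanh x) ^ 2) (Ioi 0) := by
  exact integrableOn_Ioi_deriv_of_nonneg' (fun x _ => hasDerivAt_F x)
    (fun x _ => sq_nonneg _) F_tendsto

lemma integral_Ioi : ∫ x in Ioi (0:ℝ), (1 - Real.tanh x) ^ 2 = Real.log 4 - 1 := by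
  have h := integral_Ioi_of_hasDerivAt_of_nonneg' (a := 0) (fun x _ => hasDerivAt_F x)
    (fun x _ => sq_nonneg _) F_tendsto
  have hF0 : F 0 = 0 := by simp [F]
  rw [h, hF0, sub_zero]

noncomputable def h (u : ℝ) : ℝ := (1 - Real.tanh |u|) ^ 2

lemma h_integrable : Integrable h := by
  have int_Ioi : IntegrableOn h (Ioi 0) := by
    apply integrableOn_Ioi.congr_fun _ measurableSet_Ioi
    intro x hx
    rw [h, abs_of_pos hx]
  have int_Iic : IntegrableOn h (Iic 0) := by
    rw [← Measure.map_neg_eq_self (volume : Measure ℝ)]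
    have m : MeasurableEmbedding fun x : ℝ => -x := (Homeomorph.neg ℝ).measurableEmbedding
    rw [m.integrableOn_map_iff]
    have : (h ∘ fun x : ℝ => -x) = h := by
      funext x; simp [h, Function.comp, abs_neg]
    rw [this]
    simp only [neg_preimage, neg_Iic, neg_zero]
    exact Iff.mpr integrableOn_Ici_iff_integrableOn_Ioi int_Ioi
  have := int_Iic.union int_Ioi
  rwa [Iic_union_Ioi, integrableOn_univ] at this

lemma h_integral : ∫ u, h u = 2 * (Real.log 4 - 1) := by
  rw [show (fun u => h u) = fun u => (fun t => (1 - Real.tanh t) ^ 2) |u| from rfl]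
  rw [integral_comp_abs (f := fun t => (1 - Real.tanh t) ^ 2), integral_Ioi]

noncomputable def g (u : ℝ) : ℝ := (Real.tanh u - Real.sign u) ^ 2

lemma g_ae_eq : g =ᵐ[volume] h := by
  have hmem : ({(0:ℝ)} : Set ℝ)ᶜ ∈ ae (volume : Measure ℝ) :=
    compl_mem_ae_iff.mpr (measure_singleton 0)
  filter_upwards [hmem] with u hu
  have hu0 : u ≠ 0 := by simpa using hu
  rcases hu0.lt_or_gt with hlt | hgt
  · rw [g, h, Real.sign_of_neg hlt, abs_of_neg hlt, Real.tanh_neg]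
    ring
  · rw [g, h, Real.sign_of_pos hgt, abs_of_pos hgt]
    ring

lemma g_integrable : Integrable g := h_integrable.congr g_ae_eq.symm

lemma g_integral : ∫ u, g u = 2 * (Real.log 4 - 1) := by
  rw [integral_congr_ae g_ae_eq, h_integral]

lemma g_nonneg (u : ℝ) : 0 ≤ g u := sq_nonneg _

lemma sign_mul_pos {c : ℝ} (hc : 0 < c) (x : ℝ) : Real.sign (c * x) = Real.sign x := by
  rcases lt_trichotomy x 0 with hx | hx | hx
  · rw [Real.sign_of_neg hx, Real.sign_of_neg (mul_neg_of_pos_of_neg hc hx)]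
  · rw [hx, mul_zero]
  · rw [Real.sign_of_pos hx, Real.sign_of_pos (mul_pos hc hx)]

end TanhAux

open TanhAux

/-- Approximation error of the entropic map `tanh(2x/ε)` to the optimal map
`sign(x)` in the one-dimensional symmetric semi-discrete example:
`ε⁻¹ ∫ (tanh(2x/ε) - sign x)² p(x) dx → p(0)(log 4 - 1)` as `ε → 0⁺`. -/
theorem tanh_approx_sign_rate
    (p : ℝ → ℝ) (hmeas : Measurable p) (hpos : ∀ x, 0 ≤ p x)
    (hbdd : ∃ M, ∀ x, p x ≤ M) (hdens : ∫ x, p x = 1)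
    (hsymm : ∀ x, p (-x) = p x) (hcont : ContinuousAt p 0) :
    Tendsto (fun ε : ℝ =>
        ε⁻¹ * ∫ x, (Real.tanh (2 * x / ε) - Real.sign x) ^ 2 * p x)
      (nhdsWithin 0 (Set.Ioi 0))
      (nhds (p 0 * (Real.log 4 - 1))) := by
  obtain ⟨M, hM⟩ := hbdd
  have hM0 : 0 ≤ M := le_trans (hpos 0) (hM 0)
  -- the rescaled family
  set Φ : ℝ → ℝ → ℝ := fun ε u => (2:ℝ)⁻¹ * (g u * p (ε * u / 2)) with hΦ
  -- dominated convergence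
  have key : Tendsto (fun ε => ∫ u, Φ ε u) (nhdsWithin 0 (Set.Ioi 0))
      (nhds (∫ u, (2:ℝ)⁻¹ * (g u * p 0))) := by
    apply tendsto_integral_filter_of_dominated_convergence
      (bound := fun u => (2:ℝ)⁻¹ * M * h u)
    · -- measurability
      apply Eventually.of_forall
      intro ε
      have hhm : Measurable h := by
        have : Continuous h := by
          apply Continuous.pow
          apply Continuous.sub continuous_const
          have : Continuous Real.tanh := by
            rw [show Real.tanh = fun x => Real.sinh x / Real.cosh x from
              funext fun x => Real.tanh_eq_sinh_div_cosh x]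
            exact Real.continuous_sinh.div Real.continuous_cosh
              fun x => (Real.cosh_pos x).ne'
          exact this.comp continuous_abs
        exact this.measurable
      have hpm : Measurable fun u => p (ε * u / 2) :=
        hmeas.comp (by fun_prop)
      have : (fun u => (2:ℝ)⁻¹ * (h u * p (ε * u / 2))) =ᵐ[volume] Φ ε := by
        filter_upwards [g_ae_eq] with u hu
        show (2:ℝ)⁻¹ * (h u * p (ε * u / 2)) = (2:ℝ)⁻¹ * (g u * p (ε * u / 2))
        rw [hu]
      exact (AEStronglyMeasurable.congr
        ((hhm.aestronglyMeasurable.mul hpm.aestronglyMeasurable).const_mul _) this)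
    · -- bound
      apply Eventually.of_forall
      intro ε
      filter_upwards [g_ae_eq] with u hgu
      have h1 : 0 ≤ g u * p (ε * u / 2) := mul_nonneg (g_nonneg u) (hpos _)
      rw [hΦ, Real.norm_eq_abs, abs_of_nonneg (by positivity)]
      rw [mul_assoc, ← hgu]
      apply mul_le_mul_of_nonneg_left _ (by norm_num)
      calc g u * p (ε * u / 2) ≤ g u * M :=
            mul_le_mul_of_nonneg_left (hM _) (g_nonneg u)
        _ = M * g u := mul_comm _ _
    · -- bound integrable
      exact (h_integrable.const_mul _)
    · -- pointwise limit
      apply Eventually.of_forall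
      intro u
      have hc : Tendsto (fun ε : ℝ => ε * u / 2) (nhdsWithin 0 (Set.Ioi 0)) (nhds 0) := by
        have hcont2 : Continuous fun ε : ℝ => ε * u / 2 := by fun_prop
        have := hcont2.tendsto 0
        simp only [zero_mul, zero_div] at this
        exact this.mono_left nhdsWithin_le_nhds
      exact (tendsto_const_nhds.mul (hcont.tendsto.comp hc)).const_mul _
  -- value of the limit integral
  have hval : ∫ u, (2:ℝ)⁻¹ * (g u * p 0) = p 0 * (Real.log 4 - 1) := by
    have : (fun u => (2:ℝ)⁻¹ * (g u * p 0)) = fun u => ((2:ℝ)⁻¹ * p 0) * g u := by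
      funext u; ring
    rw [this, MeasureTheory.integral_const_mul, g_integral]
    ring
  rw [hval] at key
  -- identify the two expressions for ε > 0
  apply key.congr'
  filter_upwards [self_mem_nhdsWithin] with ε hε
  have hε0 : (0:ℝ) < ε := hε
  have hεne : ε ≠ 0 := hε0.ne'
  set G : ℝ → ℝ := fun u => g u * p (ε * u / 2) with hG
  have hsub : (∫ x, G ((2 / ε) * x)) = |(2 / ε)⁻¹| • ∫ u, G u :=
    Measure.integral_comp_mul_left G (2 / ε)
  have hGx : ∀ x, G ((2 / ε) * x) = (Real.tanh (2 * x / ε) - Real.sign x) ^ 2 * p x := by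
    intro x
    have h1 : (2 / ε) * x = 2 * x / ε := by ring
    have h2 : ε * ((2 / ε) * x) / 2 = x := by field_simp
    have h3 : Real.sign ((2 / ε) * x) = Real.sign x :=
      sign_mul_pos (by positivity) x
    rw [hG]
    simp only [g]
    rw [h2, h3, h1]
  have habs : |(2 / ε)⁻¹| = ε / 2 := by
    rw [abs_of_pos (by positivity)]
    field_simp
  have : (∫ x, (Real.tanh (2 * x / ε) - Real.sign x) ^ 2 * p x) = (ε / 2) * ∫ u, G u := by
    rw [← habs, ← smul_eq_mul, ← hsub]
    congr 1
    funext x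
    exact (hGx x).symm
  rw [this]
  have : (∫ u, Φ ε u) = (2:ℝ)⁻¹ * ∫ u, G u := by
    rw [← MeasureTheory.integral_const_mul]
  rw [this]
  field_simp
end

section
/- Let $\pi$ and $\rho$ be probability measures supported in $B(0;R) \subset \mathbb{R}^d$. Then $W_1(\pi, \rho)^2 \le 8R^2 \, \mathrm{KL}(\pi \| \rho)$. -/
open MeasureTheory ENNReal
open scoped Classical

/-- The 1-Wasserstein distance, as the infimum of the transport cost over couplings. -/
noncomputable def wassersteinOne {E : Type*} [MeasurableSpace E] [PseudoMetricSpace E]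
    (π ρ : Measure E) : ℝ :=
  ⨅ γ : {γ : Measure (E × E) // γ.map Prod.fst = π ∧ γ.map Prod.snd = ρ},
    ∫ p, dist p.1 p.2 ∂(γ : Measure (E × E))

/-- Kullback–Leibler divergence, equal to `∞` when `π` is not absolutely continuous
with respect to `ρ` or when the log-density is not integrable. -/
noncomputable def klDiv' {E : Type*} [MeasurableSpace E] (π ρ : Measure E) : ℝ≥0∞ :=
  if π ≪ ρ ∧ Integrable (fun x => Real.log (π.rnDeriv ρ x).toReal) π then
    ENNReal.ofReal (∫ x, Real.log (π.rnDeriv ρ x).toReal ∂π)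
  else ∞

lemma sqrt_sub_one_sq_le (t : ℝ) (ht : 0 ≤ t) :
    (Real.sqrt t - 1) ^ 2 ≤ t * Real.log t - t + 1 := by
  rcases eq_or_lt_of_le ht with h0 | h0
  · simp [← h0]
  · set s := Real.sqrt t with hs
    have hs0 : 0 < s := Real.sqrt_pos.2 h0
    have hss : s * s = t := Real.mul_self_sqrt ht
    have hlog : 1 - s⁻¹ ≤ Real.log s := by
      have := Real.log_le_sub_one_of_pos (x := s⁻¹) (by positivity)
      rw [Real.log_inv] at this
      linarith
    have hlt : Real.log t = 2 * Real.log s := by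
      rw [← hss, Real.log_mul (ne_of_gt hs0) (ne_of_gt hs0)]; ring
    have ht_s : t * s⁻¹ = s := by field_simp [← hss]; rw [← hss]; ring
    have h1 : 2 * t - 2 * s ≤ t * Real.log t := by
      rw [hlt]
      have h2 : t * (2 * (1 - s⁻¹)) ≤ t * (2 * Real.log s) :=
        mul_le_mul_of_nonneg_left (by linarith) (le_of_lt h0)
      nlinarith
    nlinarith


lemma wassersteinOne_le_of_coupling {E : Type*} [MeasurableSpace E] [PseudoMetricSpace E]
    {π ρ : Measure E} (γ : Measure (E × E)) (h1 : γ.map Prod.fst = π) (h2 : γ.map Prod.snd = ρ)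
    {c : ℝ} (hc : ∫ p, dist p.1 p.2 ∂γ ≤ c) : wassersteinOne π ρ ≤ c := by
  refine le_trans (ciInf_le ⟨0, ?_⟩ ⟨γ, h1, h2⟩) hc
  rintro x ⟨γ', rfl⟩
  exact integral_nonneg fun p => dist_nonneg


lemma wassersteinOne_nonneg {E : Type*} [MeasurableSpace E] [PseudoMetricSpace E]
    (π ρ : Measure E) [IsProbabilityMeasure π] [IsProbabilityMeasure ρ] :
    0 ≤ wassersteinOne π ρ := by
  have : Nonempty {γ : Measure (E × E) // γ.map Prod.fst = π ∧ γ.map Prod.snd = ρ} :=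
    ⟨⟨π.prod ρ, by simp, by simp⟩⟩
  exact le_ciInf fun γ => integral_nonneg fun p => dist_nonneg

lemma coupling_bound
    {d : ℕ} (R : ℝ) (hR : 0 < R)
    (π ρ : Measure (EuclideanSpace ℝ (Fin d)))
    [IsProbabilityMeasure π] [IsProbabilityMeasure ρ]
    (hπ : π (Metric.closedBall 0 R)ᶜ = 0) (hρ : ρ (Metric.closedBall 0 R)ᶜ = 0)
    (hac : π ≪ ρ) :
    wassersteinOne π ρ ≤ R * ∫ x, |(π.rnDeriv ρ x).toReal - 1| ∂ρ := by
  set E := EuclideanSpace ℝ (Fin d)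
  set f := π.rnDeriv ρ with hf
  have hfm : Measurable f := Measure.measurable_rnDeriv π ρ
  set ν := ρ.withDensity (fun x => min (f x) 1) with hνdef
  set μ₁ := ρ.withDensity (fun x => f x - 1) with hμ₁def
  set μ₂ := ρ.withDensity (fun x => 1 - f x) with hμ₂def
  have hν1 : ν + μ₁ = π := by
    rw [hνdef, hμ₁def, ← withDensity_add_right _ (g := fun x => f x - 1) (hfm.sub measurable_const)]
    have heq : (fun x => min (f x) 1 + (f x - 1)) = f := funext fun x => by
      rcases le_total (f x) 1 with h | h
      · simp [min_eq_left h, tsub_eq_zero_of_le h]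
      · rw [min_eq_right h, add_comm, tsub_add_cancel_of_le h]
    rw [show ((fun x => min (f x) 1) + fun x => f x - 1) = f from heq]
    exact @Measure.withDensity_rnDeriv_eq _ _ π ρ (Measure.haveLebesgueDecomposition_of_sigmaFinite π ρ) hac
  have hν2 : ν + μ₂ = ρ := by
    rw [hνdef, hμ₂def, ← withDensity_add_right _ (g := fun x => 1 - f x) (measurable_const.sub hfm)]
    have heq : ((fun x => min (f x) 1) + fun x => 1 - f x) = fun _ => (1 : ℝ≥0∞) :=
      funext fun x => by
        rcases le_total (f x) 1 with h | h
        · simp only [Pi.add_apply, min_eq_left h]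
          exact add_tsub_cancel_of_le h
        · simp [min_eq_right h, tsub_eq_zero_of_le h]
    rw [heq]
    exact withDensity_one
  set a := μ₁ Set.univ with hadef
  set b := μ₂ Set.univ with hbdef
  have hνa : ν Set.univ + a = 1 := by
    have := congrArg (fun m : Measure E => m Set.univ) hν1
    simpa [Measure.add_apply] using this
  have hνb : ν Set.univ + b = 1 := by
    have := congrArg (fun m : Measure E => m Set.univ) hν2
    simpa [Measure.add_apply] using this
  have hνfin : ν Set.univ ≠ ∞ := by
    intro h; rw [h] at hνa; simp at hνa
  have hab : a = b := by
    rw [← ENNReal.add_right_inj hνfin, hνa, hνb]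
  have ha1 : a ≤ 1 := le_of_add_le_right hνa.le
  have ha_top : a ≠ ∞ := ne_top_of_le_ne_top one_ne_top ha1
  have hflt : ∀ᵐ x ∂ρ, f x < ∞ := Measure.rnDeriv_lt_top π ρ
  have hFint : Integrable (fun x => (f x).toReal) ρ := Measure.integrable_toReal_rnDeriv
  have haint : a.toReal = ∫ x, (f x - 1).toReal ∂ρ := by
    rw [hadef, hμ₁def, withDensity_apply _ MeasurableSet.univ, setLIntegral_univ,
      ← integral_toReal (f := fun x => f x - 1) ((hfm.sub measurable_const).aemeasurable)
        (hflt.mono fun x hx => lt_of_le_of_lt tsub_le_self hx)]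
  have hbint : b.toReal = ∫ x, (1 - f x).toReal ∂ρ := by
    rw [hbdef, hμ₂def, withDensity_apply _ MeasurableSet.univ, setLIntegral_univ,
      ← integral_toReal (f := fun x => 1 - f x) ((measurable_const.sub hfm).aemeasurable)
        (Filter.Eventually.of_forall fun x => lt_of_le_of_lt tsub_le_self one_lt_top)]
  have hI1 : Integrable (fun x => (f x - 1).toReal) ρ := by
    refine Integrable.mono' hFint ((hfm.sub measurable_const).ennreal_toReal.aestronglyMeasurable)
      ?_
    filter_upwards [hflt] with x hx
    rw [Real.norm_of_nonneg ENNReal.toReal_nonneg]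
    exact ENNReal.toReal_mono hx.ne tsub_le_self
  have hI2 : Integrable (fun x => (1 - f x).toReal) ρ := by
    refine Integrable.mono' (integrable_const (1:ℝ))
      ((measurable_const.sub hfm).ennreal_toReal.aestronglyMeasurable) ?_
    refine Filter.Eventually.of_forall fun x => ?_
    rw [Real.norm_of_nonneg ENNReal.toReal_nonneg]
    simpa using ENNReal.toReal_mono one_ne_top tsub_le_self
  have hsum : ∀ᵐ x ∂ρ, (f x - 1).toReal + (1 - f x).toReal = |(f x).toReal - 1| := by
    filter_upwards [hflt] with x hx
    rcases le_total (f x) 1 with h | h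
    · have hF1 : (f x).toReal ≤ 1 := by simpa using ENNReal.toReal_mono one_ne_top h
      rw [tsub_eq_zero_of_le h, ENNReal.toReal_sub_of_le h one_ne_top,
        abs_of_nonpos (by linarith)]
      simp
    · have hF1 : 1 ≤ (f x).toReal := by
        rw [show (1:ℝ) = (1:ℝ≥0∞).toReal by simp]
        exact ENNReal.toReal_mono hx.ne h
      rw [tsub_eq_zero_of_le h, ENNReal.toReal_sub_of_le h hx.ne, abs_of_nonneg (by simpa using hF1)]
      simp
  have hTV : 2 * a.toReal = ∫ x, |(f x).toReal - 1| ∂ρ := by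
    have h1 : a.toReal + b.toReal = ∫ x, ((f x - 1).toReal + (1 - f x).toReal) ∂ρ := by
      rw [haint, hbint, integral_add hI1 hI2]
    rw [show (2:ℝ) * a.toReal = a.toReal + b.toReal by rw [← hab]; ring, h1]
    exact integral_congr_ae hsum
  have hRTV : R * ∫ x, |(f x).toReal - 1| ∂ρ = 2 * R * a.toReal := by
    rw [← hTV]; ring
  rw [show (∫ x, |(π.rnDeriv ρ x).toReal - 1| ∂ρ) = ∫ x, |(f x).toReal - 1| ∂ρ from rfl, hRTV]
  by_cases haz : a = 0
  · -- π = ρ, use the diagonal coupling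
    have hμ₁0 : μ₁ = 0 := Measure.measure_univ_eq_zero.mp haz
    have hμ₂0 : μ₂ = 0 := Measure.measure_univ_eq_zero.mp (by rw [← hbdef, ← hab]; exact haz)
    have hπρ : π = ρ := by rw [← hν1, ← hν2, hμ₁0, hμ₂0]
    have hdiag : Measurable fun x : E => (x, x) := measurable_id.prodMk measurable_id
    have hmap1 : (π.map fun x : E => (x, x)).map Prod.fst = π := by
      rw [Measure.map_map measurable_fst hdiag]
      rw [show (Prod.fst ∘ fun x : E => (x, x)) = id from rfl, Measure.map_id]
    have hmap2 : (π.map fun x : E => (x, x)).map Prod.snd = ρ := by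
      rw [Measure.map_map measurable_snd hdiag]
      rw [← hπρ, show (Prod.snd ∘ fun x : E => (x, x)) = id from rfl, Measure.map_id]
    refine wassersteinOne_le_of_coupling _ hmap1 hmap2 ?_
    have : ∫ p : E × E, dist p.1 p.2 ∂(π.map fun x : E => (x, x)) = 0 := by
      rw [integral_map hdiag.aemeasurable
        ((continuous_fst.dist continuous_snd).aestronglyMeasurable)]
      simp
    rw [this]
    positivity
  · have hμ₁π : μ₁ ≤ π := by
      rw [← hν1]; exact Measure.le_add_left le_rfl
    have hμ₂ρ : μ₂ ≤ ρ := by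
      conv_rhs => rw [← withDensity_one (μ := ρ)]
      exact withDensity_mono (Filter.Eventually.of_forall fun x => tsub_le_self)
    haveI : IsFiniteMeasure μ₁ := ⟨lt_of_le_of_lt ha1 one_lt_top⟩
    haveI : IsFiniteMeasure μ₂ := ⟨lt_of_le_of_lt (le_of_add_le_right hνb.le) one_lt_top⟩
    set B := Metric.closedBall (0 : E) R with hBdef
    have hμ₁B : μ₁ Bᶜ = 0 := le_antisymm (le_trans (hμ₁π Bᶜ) hπ.le) zero_le
    set γ₀ := μ₁.prod μ₂ with hγ₀def
    have hγ₀null : γ₀ ((B ×ˢ B)ᶜ) = 0 := by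
      have hsub : (B ×ˢ B)ᶜ ⊆ (Bᶜ ×ˢ (Set.univ : Set E)) ∪ ((Set.univ : Set E) ×ˢ Bᶜ) := by
        intro p hp
        simp only [Set.mem_compl_iff, Set.mem_prod, not_and_or] at hp
        rcases hp with h | h
        · exact Or.inl ⟨h, trivial⟩
        · exact Or.inr ⟨trivial, h⟩
      refine measure_mono_null hsub ?_
      refine le_antisymm (le_trans (measure_union_le _ _) ?_) zero_le
      rw [hγ₀def, Measure.prod_prod, Measure.prod_prod, hμ₁B]
      have hμ₂B : μ₂ Bᶜ = 0 := le_antisymm (le_trans (hμ₂ρ Bᶜ) hρ.le) zero_le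
      rw [hμ₂B]
      simp
    have hdist_ae : ∀ᵐ p ∂γ₀, dist p.1 p.2 ≤ 2 * R := by
      have := measure_mono_null (s := (B ×ˢ B)ᶜ) (fun x hx => hx) hγ₀null
      filter_upwards [(ae_iff (p := fun p => p ∈ B ×ˢ B)).mpr hγ₀null] with p hp
      simp only [Set.mem_prod, hBdef, Metric.mem_closedBall] at hp
      calc dist p.1 p.2 ≤ dist p.1 0 + dist 0 p.2 := dist_triangle _ _ _
        _ ≤ R + R := add_le_add hp.1 (dist_comm (0:E) p.2 ▸ hp.2)
        _ = 2 * R := by ring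
    have hsm : AEStronglyMeasurable (fun p : E × E => dist p.1 p.2) γ₀ :=
      (continuous_fst.dist continuous_snd).aestronglyMeasurable
    have hint_dist : Integrable (fun p : E × E => dist p.1 p.2) γ₀ := by
      refine Integrable.mono' (integrable_const (2 * R)) hsm ?_
      filter_upwards [hdist_ae] with p hp
      rwa [Real.norm_of_nonneg dist_nonneg]
    have hcost0 : ∫ p, dist p.1 p.2 ∂γ₀ ≤ (a * b).toReal * (2 * R) := by
      have h := integral_mono_ae hint_dist (integrable_const (2 * R)) hdist_ae
      rw [integral_const] at h
      have : γ₀ Set.univ = a * b := by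
        rw [hγ₀def, ← Set.univ_prod_univ, Measure.prod_prod]
      rw [measureReal_def, this] at h
      simpa [smul_eq_mul] using h
    -- the coupling
    have hdiag : Measurable fun x : E => (x, x) := measurable_id.prodMk measurable_id
    set γ := ν.map (fun x : E => (x, x)) + (a⁻¹ • γ₀) with hγdef
    have hγfst : γ.map Prod.fst = π := by
      rw [hγdef, Measure.map_add _ _ measurable_fst, Measure.map_map measurable_fst hdiag,
        Measure.map_smul, hγ₀def, Measure.map_fst_prod]
      have h1 : ν.map (Prod.fst ∘ fun x : E => (x, x)) = ν := by
        rw [show (Prod.fst ∘ fun x : E => (x, x)) = id from rfl, Measure.map_id]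
      rw [h1, ← hbdef, ← hab, smul_smul, ENNReal.inv_mul_cancel haz ha_top, one_smul, hν1]
    have hγsnd : γ.map Prod.snd = ρ := by
      rw [hγdef, Measure.map_add _ _ measurable_snd, Measure.map_map measurable_snd hdiag,
        Measure.map_smul, hγ₀def, Measure.map_snd_prod]
      have h1 : ν.map (Prod.snd ∘ fun x : E => (x, x)) = ν := by
        rw [show (Prod.snd ∘ fun x : E => (x, x)) = id from rfl, Measure.map_id]
      rw [h1, ← hadef, smul_smul, ENNReal.inv_mul_cancel haz ha_top, one_smul, hν2]
    refine wassersteinOne_le_of_coupling γ hγfst hγsnd ?_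
    have hint1 : Integrable (fun p : E × E => dist p.1 p.2) (ν.map fun x : E => (x, x)) := by
      rw [integrable_map_measure (continuous_fst.dist continuous_snd).aestronglyMeasurable
        hdiag.aemeasurable]
      simp [Function.comp_def, dist_self]
    have hint2 : Integrable (fun p : E × E => dist p.1 p.2) (a⁻¹ • γ₀) :=
      hint_dist.smul_measure (by simp [haz])
    rw [hγdef, integral_add_measure hint1 hint2]
    have hzero : ∫ p, dist p.1 p.2 ∂(ν.map fun x : E => (x, x)) = 0 := by
      rw [integral_map hdiag.aemeasurable
        (continuous_fst.dist continuous_snd).aestronglyMeasurable]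
      simp
    rw [hzero, zero_add, integral_smul_measure]
    have hfin : ∫ p, dist p.1 p.2 ∂γ₀ ≥ 0 := integral_nonneg fun p => dist_nonneg
    have h2 : (a⁻¹).toReal * ∫ p, dist p.1 p.2 ∂γ₀ ≤ (a⁻¹).toReal * ((a * b).toReal * (2 * R)) :=
      mul_le_mul_of_nonneg_left hcost0 ENNReal.toReal_nonneg
    have haR : a.toReal ≠ 0 := by
      simp [ENNReal.toReal_ne_zero, haz, ha_top]
    have key : a⁻¹.toReal * ((a * b).toReal * (2 * R)) = 2 * R * a.toReal := by
      rw [← hab, ENNReal.toReal_inv, ENNReal.toReal_mul]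
      field_simp
    exact le_trans (by simpa [smul_eq_mul] using h2) (le_of_eq key)

lemma pinsker_aux {α : Type*} [MeasurableSpace α] (π ρ : Measure α)
    [IsProbabilityMeasure π] [IsProbabilityMeasure ρ] (hac : π ≪ ρ)
    (hint : Integrable (fun x => Real.log (π.rnDeriv ρ x).toReal) π) :
    (∫ x, |(π.rnDeriv ρ x).toReal - 1| ∂ρ) ^ 2 ≤
      4 * ∫ x, Real.log (π.rnDeriv ρ x).toReal ∂π := by
  set f := π.rnDeriv ρ with hfdef
  have hfm : Measurable f := Measure.measurable_rnDeriv π ρ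
  set F : α → ℝ := fun x => (f x).toReal with hFdef
  have hFm : Measurable F := hfm.ennreal_toReal
  have hFnn : ∀ x, 0 ≤ F x := fun x => ENNReal.toReal_nonneg
  have hFint : Integrable F ρ := Measure.integrable_toReal_rnDeriv
  have hFone : ∫ x, F x ∂ρ = 1 := by
    rw [hFdef, Measure.integral_toReal_rnDeriv hac]; simp
  set K := ∫ x, Real.log (F x) ∂π with hKdef
  have hKρ : ∫ x, F x * Real.log (F x) ∂ρ = K := by
    have := MeasureTheory.integral_rnDeriv_smul (f := fun x => Real.log (F x)) hac
    simpa [smul_eq_mul] using this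
  have hFlog_int : Integrable (fun x => F x * Real.log (F x)) ρ := by
    have := (MeasureTheory.integrable_rnDeriv_smul_iff (f := fun x => Real.log (F x)) hac).2 hint
    simpa [smul_eq_mul] using this
  set φ : α → ℝ := fun x => F x * Real.log (F x) - F x + 1 with hφdef
  have hφint : Integrable φ ρ := (hFlog_int.sub hFint).add (integrable_const 1)
  have hφ_eq : ∫ x, φ x ∂ρ = K := by
    have h1 : ∫ x, φ x ∂ρ
        = (∫ x, (F x * Real.log (F x) - F x) ∂ρ) + ∫ _x, (1:ℝ) ∂ρ := by
      simpa using integral_add (μ := ρ) (f := fun x => F x * Real.log (F x) - F x)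
        (g := fun _ => (1:ℝ)) (hFlog_int.sub hFint) (integrable_const 1)
    have h2 : ∫ x, (F x * Real.log (F x) - F x) ∂ρ = K - 1 := by
      rw [integral_sub hFlog_int hFint, hKρ, hFone]
    have h3 : ∫ _x, (1:ℝ) ∂ρ = 1 := by simp
    rw [h1, h2, h3]; ring
  set G : α → ℝ := fun x => Real.sqrt (F x) with hGdef
  have hGm : Measurable G := hFm.sqrt
  have hGsq : ∀ x, G x * G x = F x := fun x => Real.mul_self_sqrt (hFnn x)
  have hGnn : ∀ x, 0 ≤ G x := fun x => Real.sqrt_nonneg _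
  -- integrability of the squares
  have hbound : Integrable (fun x => 2 * F x + 2) ρ := (hFint.const_mul 2).add (integrable_const 2)
  have hu2_int : Integrable (fun x => (G x - 1) ^ 2) ρ := by
    refine Integrable.mono' hbound ((hGm.sub measurable_const).pow_const 2).aestronglyMeasurable
      (Filter.Eventually.of_forall fun x => ?_)
    rw [Real.norm_of_nonneg (by positivity)]
    nlinarith [hGsq x, hGnn x]
  have hGF : ∀ x, (G x + 1) ^ 2 ≤ 2 * F x + 2 := fun x => by
    nlinarith [hGsq x, hGnn x, sq_nonneg (G x - 1)]
  have hv2_int : Integrable (fun x => (G x + 1) ^ 2) ρ := by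
    refine Integrable.mono' hbound ((hGm.add measurable_const).pow_const 2).aestronglyMeasurable
      (Filter.Eventually.of_forall fun x => ?_)
    rw [Real.norm_of_nonneg (by positivity)]
    exact hGF x
  -- Cauchy-Schwarz
  have habs : ∀ x, |F x - 1| = |G x - 1| * |G x + 1| := by
    intro x
    rw [← abs_mul]
    congr 1
    nlinarith [hGsq x]
  have hCS : ∫ x, |F x - 1| ∂ρ ≤
      (∫ x, (G x - 1) ^ 2 ∂ρ) ^ ((1:ℝ)/2) * (∫ x, (G x + 1) ^ 2 ∂ρ) ^ ((1:ℝ)/2) := by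
    have h22 : (2:ℝ).HolderConjugate 2 := Real.HolderConjugate.two_two
    have hm1 : MemLp (fun x => |G x - 1|) (ENNReal.ofReal 2) ρ := by
      rw [show ENNReal.ofReal (2:ℝ) = 2 by norm_num]
      refine (memLp_two_iff_integrable_sq (hGm.sub measurable_const).abs.aestronglyMeasurable).2 ?_
      simpa [sq_abs] using hu2_int
    have hm2 : MemLp (fun x => |G x + 1|) (ENNReal.ofReal 2) ρ := by
      rw [show ENNReal.ofReal (2:ℝ) = 2 by norm_num]
      refine (memLp_two_iff_integrable_sq (hGm.add measurable_const).abs.aestronglyMeasurable).2 ?_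
      simpa [sq_abs] using hv2_int
    have := integral_mul_le_Lp_mul_Lq_of_nonneg h22
      (Filter.Eventually.of_forall fun x => abs_nonneg (G x - 1))
      (Filter.Eventually.of_forall fun x => abs_nonneg (G x + 1)) hm1 hm2
    have e : ∀ y : ℝ, y ^ (2:ℝ) = y ^ (2:ℕ) := fun y => by
      rw [show (2:ℝ) = ((2:ℕ):ℝ) by norm_num, Real.rpow_natCast]
    simp only [e, sq_abs] at this
    calc ∫ x, |F x - 1| ∂ρ = ∫ x, |G x - 1| * |G x + 1| ∂ρ :=
          integral_congr_ae (Filter.Eventually.of_forall fun x => habs x)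
      _ ≤ _ := this
  have hI1 : ∫ x, (G x - 1) ^ 2 ∂ρ ≤ K := by
    rw [← hφ_eq]
    refine integral_mono hu2_int hφint fun x => ?_
    simpa [hGdef] using sqrt_sub_one_sq_le (F x) (hFnn x)
  have hI2 : ∫ x, (G x + 1) ^ 2 ∂ρ ≤ 4 := by
    have : ∫ x, 2 * F x + 2 ∂ρ = 4 := by
      rw [integral_add (hFint.const_mul 2) (integrable_const 2), integral_const_mul, hFone]
      simp; norm_num
    rw [← this]
    exact integral_mono hv2_int hbound fun x => hGF x
  have hI1nn : 0 ≤ ∫ x, (G x - 1) ^ 2 ∂ρ := integral_nonneg fun x => sq_nonneg _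
  have hI2nn : 0 ≤ ∫ x, (G x + 1) ^ 2 ∂ρ := integral_nonneg fun x => sq_nonneg _
  have habs_nn : 0 ≤ ∫ x, |F x - 1| ∂ρ := integral_nonneg fun x => abs_nonneg _
  have hsq : (∫ x, |F x - 1| ∂ρ) ^ 2 ≤ (∫ x, (G x - 1) ^ 2 ∂ρ) * (∫ x, (G x + 1) ^ 2 ∂ρ) := by
    have h := pow_le_pow_left₀ habs_nn hCS 2
    calc (∫ x, |F x - 1| ∂ρ) ^ 2 ≤
        ((∫ x, (G x - 1) ^ 2 ∂ρ) ^ ((1:ℝ)/2) * (∫ x, (G x + 1) ^ 2 ∂ρ) ^ ((1:ℝ)/2)) ^ 2 := h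
      _ = (∫ x, (G x - 1) ^ 2 ∂ρ) * (∫ x, (G x + 1) ^ 2 ∂ρ) := by
          rw [mul_pow, ← Real.rpow_natCast (_ ^ ((1:ℝ)/2)) 2, ← Real.rpow_natCast (_ ^ ((1:ℝ)/2)) 2,
            ← Real.rpow_mul hI1nn, ← Real.rpow_mul hI2nn]
          norm_num
  calc (∫ x, |F x - 1| ∂ρ) ^ 2 ≤ (∫ x, (G x - 1) ^ 2 ∂ρ) * (∫ x, (G x + 1) ^ 2 ∂ρ) := hsq
    _ ≤ K * 4 := mul_le_mul hI1 hI2 hI2nn (le_trans hI1nn hI1)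
    _ = 4 * K := by ring

/-- Transport–entropy (`T₁`) inequality for measures supported in a ball of radius `R`:
`W₁(π, ρ)² ≤ 8 R² KL(π ‖ ρ)`. -/
theorem wasserstein_one_sq_le_kl
    {d : ℕ} (R : ℝ) (hR : 0 < R)
    (π ρ : Measure (EuclideanSpace ℝ (Fin d)))
    [IsProbabilityMeasure π] [IsProbabilityMeasure ρ]
    (hπ : π (Metric.closedBall 0 R)ᶜ = 0) (hρ : ρ (Metric.closedBall 0 R)ᶜ = 0) :
    ENNReal.ofReal (wassersteinOne π ρ ^ 2) ≤
      ENNReal.ofReal (8 * R ^ 2) * klDiv' π ρ := by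
  by_cases hcase : π ≪ ρ ∧ Integrable (fun x => Real.log (π.rnDeriv ρ x).toReal) π
  · obtain ⟨hac, hint⟩ := hcase
    rw [klDiv', if_pos ⟨hac, hint⟩]
    set K := ∫ x, Real.log (π.rnDeriv ρ x).toReal ∂π with hKdef
    set T := ∫ x, |(π.rnDeriv ρ x).toReal - 1| ∂ρ with hTdef
    have hT2 : T ^ 2 ≤ 4 * K := pinsker_aux π ρ hac hint
    have hTnn : 0 ≤ T := integral_nonneg fun x => abs_nonneg _
    have hW1 : wassersteinOne π ρ ≤ R * T := coupling_bound R hR π ρ hπ hρ hac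
    have hW0 : 0 ≤ wassersteinOne π ρ := wassersteinOne_nonneg π ρ
    have hWsq : wassersteinOne π ρ ^ 2 ≤ (R * T) ^ 2 := by
      have := pow_le_pow_left₀ hW0 hW1 2
      simpa using this
    rw [← ENNReal.ofReal_mul (by positivity : (0:ℝ) ≤ 8 * R ^ 2)]
    refine ENNReal.ofReal_le_ofReal ?_
    nlinarith [sq_nonneg T, sq_nonneg R, mul_le_mul_of_nonneg_left hT2 (sq_nonneg R)]
  · rw [klDiv', if_neg hcase, ENNReal.mul_top]
    · exact le_top
    · exact (ENNReal.ofReal_pos.2 (by positivity)).ne'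
end
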